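/- Let Δx, Δt > 0, θ ∈ [0,1], and define the operator 𝒜_θ on ℓ²(ℤ) by (𝒜_θ a)_j = a_j + θΔt·D₊D₊D₋(a)_j, where D₊D₊D₋(a)_j = (a_{j+2} - 3a_{j+1} + 3a_j - a_{j-1})/Δx³. Then for every a ∈ ℓ²(ℤ): ‖a‖²_{ℓ²_Δ} ≤ ‖𝒜_θ a‖²_{ℓ²_Δ} ≤ (1 + (16θΔt/Δx³)(1 + 4θΔt/Δx³)) ‖a‖²_{ℓ²_Δ}. In particular 𝒜_θ is a continuous bijection of ℓ²(ℤ) whose inverse has operator norm at most 1. -/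

import Mathlib

open scoped RealInnerProductSpace

noncomputable section
/-- `ℓ²(ℤ)` with real values. -/
abbrev L2Z := lp (fun _ : ℤ => ℝ) 2

/-- Third difference `D₊D₊D₋(a)_j = (a_{j+2} - 3a_{j+1} + 3a_j - a_{j-1})/Δx³`. -/
def D3 (Δx : ℝ) (a : ℤ → ℝ) (j : ℤ) : ℝ :=
  (a (j + 2) - 3 * a (j + 1) + 3 * a j - a (j - 1)) / Δx ^ 3

/-!
Write `𝒜_θ = 1 + κ Δ₊Δ₊Δ₋` with `κ = θΔt/Δx³` and the unscaled differences `Δ₊ = S - 1`,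
`Δ₋ = 1 - S⁻¹`, `S` the shift. Summation by parts (`Δ₊* = -Δ₋`) together with
`⟪b, Δ₊ b⟫ = -½‖Δ₊ b‖²` gives `⟪a, Δ₊Δ₊Δ₋ a⟫ = ½‖Δ₊Δ₋ a‖² ≥ 0`, so `‖a‖² ≤ ⟪a, 𝒜_θ a⟫`.
This coercivity yields `‖a‖ ≤ ‖𝒜_θ a‖` by Cauchy–Schwarz and invertibility by Lax–Milgram,
hence the lower bound and `‖𝒜_θ⁻¹‖ ≤ 1`. Since `S` is an isometry, `‖Δ₊Δ₊Δ₋‖ ≤ 2³`, so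
`‖𝒜_θ a‖ ≤ (1 + 8κ)‖a‖`, and `(1 + 8κ)² = 1 + 16κ(1 + 4κ)` is the upper bound.
-/

section Coercive

variable {E : Type*} [NormedAddCommGroup E] [InnerProductSpace ℝ E] {T : E →L[ℝ] E}

theorem norm_le_norm_apply_of_sq_norm_le_inner (hT : ∀ x, ‖x‖ ^ 2 ≤ ⟪x, T x⟫) (x : E) :
    ‖x‖ ≤ ‖T x‖ := by
  nlinarith [(hT x).trans (real_inner_le_norm x (T x)), norm_nonneg x, norm_nonneg (T x)]

theorem exists_continuousLinearEquiv_of_sq_norm_le_inner [CompleteSpace E]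
    (hT : ∀ x, ‖x‖ ^ 2 ≤ ⟪x, T x⟫) :
    ∃ e : E ≃L[ℝ] E, ⇑e = T ∧ ‖(e.symm : E →L[ℝ] E)‖ ≤ 1 := by
  have hB : IsCoercive ((innerSL ℝ).comp T) :=
    ⟨1, one_pos, fun u => by simpa [← sq, real_inner_comm] using hT u⟩
  set e := hB.continuousLinearEquivOfBilin
  have he : ⇑e = T := funext fun v => ext_inner_right ℝ fun w => by simp [e]
  refine ⟨e, he, ContinuousLinearMap.opNorm_le_bound _ zero_le_one fun y => ?_⟩
  simpa [← he] using norm_le_norm_apply_of_sq_norm_le_inner hT (e.symm y)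

end Coercive

local notation "ℓ²(" G ", " E ")" => lp (fun _ : G => E) 2

section Shift

variable {G E : Type*} [AddGroup G] [NormedAddCommGroup E]

theorem memℓp_two_comp_add_right (f : ℓ²(G, E)) (n : G) : Memℓp (fun j => f (j + n)) 2 :=
  memℓp_gen <| (Equiv.addRight n).summable_iff (f := fun j => ‖f j‖ ^ (2 : ENNReal).toReal) |>.mpr <|
    (lp.memℓp f).summable (by norm_num)

variable [InnerProductSpace ℝ E]

def lpShift (n : G) : ℓ²(G, E) →ₗᵢ[ℝ] ℓ²(G, E) where
  toFun f := ⟨fun j => f (j + n), memℓp_two_comp_add_right f n⟩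
  map_add' _ _ := rfl
  map_smul' _ _ := rfl
  norm_map' f := by
    rw [lp.norm_eq_tsum_rpow (by norm_num), lp.norm_eq_tsum_rpow (by norm_num)]
    exact congrArg (· ^ _) ((Equiv.addRight n).tsum_eq fun j => ‖f j‖ ^ (2 : ENNReal).toReal)

@[simp]
theorem lpShift_apply (n : G) (f : ℓ²(G, E)) (j : G) : lpShift n f j = f (j + n) := rfl

theorem inner_lpShift_left (n : G) (f g : ℓ²(G, E)) :
    ⟪lpShift n f, g⟫ = ⟪f, lpShift (-n) g⟫ := by
  have : lpShift n (lpShift (-n) g) = g := lp.ext <| funext fun j => by simp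
  rw [← (lpShift n).inner_map_map f (lpShift (-n) g), this]

end Shift

section Differences

variable {E : Type*} [NormedAddCommGroup E] [InnerProductSpace ℝ E]

def lpFwdDiff : ℓ²(ℤ, E) →L[ℝ] ℓ²(ℤ, E) := (lpShift 1).toContinuousLinearMap - 1

def lpBwdDiff : ℓ²(ℤ, E) →L[ℝ] ℓ²(ℤ, E) := 1 - (lpShift (-1)).toContinuousLinearMap

theorem lpFwdDiff_eq (f : ℓ²(ℤ, E)) : lpFwdDiff f = lpShift 1 f - f := rfl

theorem lpBwdDiff_eq (f : ℓ²(ℤ, E)) : lpBwdDiff f = f - lpShift (-1) f := rfl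

@[simp]
theorem lpFwdDiff_apply (f : ℓ²(ℤ, E)) (j : ℤ) : lpFwdDiff f j = f (j + 1) - f j := rfl

@[simp]
theorem lpBwdDiff_apply (f : ℓ²(ℤ, E)) (j : ℤ) : lpBwdDiff f j = f j - f (j - 1) := by
  simp [lpBwdDiff_eq, sub_eq_add_neg]

theorem norm_lpFwdDiff_le : ‖(lpFwdDiff : ℓ²(ℤ, E) →L[ℝ] ℓ²(ℤ, E))‖ ≤ 2 :=
  ContinuousLinearMap.opNorm_le_bound _ zero_le_two fun f => by
    rw [lpFwdDiff_eq, two_mul]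
    exact (norm_sub_le _ _).trans_eq (by rw [(lpShift 1).norm_map])

theorem norm_lpBwdDiff_le : ‖(lpBwdDiff : ℓ²(ℤ, E) →L[ℝ] ℓ²(ℤ, E))‖ ≤ 2 :=
  ContinuousLinearMap.opNorm_le_bound _ zero_le_two fun f => by
    rw [lpBwdDiff_eq, two_mul]
    exact (norm_sub_le _ _).trans_eq (by rw [(lpShift (-1)).norm_map])

theorem inner_lpFwdDiff_left (f g : ℓ²(ℤ, E)) : ⟪lpFwdDiff f, g⟫ = -⟪f, lpBwdDiff g⟫ := by
  simp [lpFwdDiff_eq, lpBwdDiff_eq, inner_sub_left, inner_sub_right, inner_lpShift_left]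

theorem inner_self_lpFwdDiff (f : ℓ²(ℤ, E)) : ⟪f, lpFwdDiff f⟫ = -(‖lpFwdDiff f‖ ^ 2 / 2) := by
  rw [lpFwdDiff_eq, inner_sub_right, norm_sub_sq_real, (lpShift 1).norm_map, real_inner_comm,
    real_inner_self_eq_norm_sq]
  ring

def lpThirdDiff : ℓ²(ℤ, E) →L[ℝ] ℓ²(ℤ, E) := lpFwdDiff ∘L lpFwdDiff ∘L lpBwdDiff

theorem lpThirdDiff_apply (f : ℓ²(ℤ, E)) (j : ℤ) :
    lpThirdDiff f j = f (j + 2) - (3 : ℝ) • f (j + 1) + (3 : ℝ) • f j - f (j - 1) := by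
  simp only [lpThirdDiff, ContinuousLinearMap.comp_apply, lpFwdDiff_apply, lpBwdDiff_apply,
    add_sub_cancel_right, add_assoc, one_add_one_eq_two, show j + 2 - 1 = j + 1 by ring]
  module

theorem inner_self_lpThirdDiff (f : ℓ²(ℤ, E)) :
    ⟪f, lpThirdDiff f⟫ = ‖lpFwdDiff (lpBwdDiff f)‖ ^ 2 / 2 := by
  rw [lpThirdDiff, ContinuousLinearMap.comp_apply, ContinuousLinearMap.comp_apply, real_inner_comm,
    inner_lpFwdDiff_left, real_inner_comm, inner_self_lpFwdDiff, neg_neg]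

theorem norm_lpThirdDiff_le : ‖(lpThirdDiff : ℓ²(ℤ, E) →L[ℝ] ℓ²(ℤ, E))‖ ≤ 8 := by
  have hF := norm_lpFwdDiff_le (E := E)
  have hB := norm_lpBwdDiff_le (E := E)
  rw [lpThirdDiff]
  calc _ ≤ ‖(lpFwdDiff : ℓ²(ℤ, E) →L[ℝ] ℓ²(ℤ, E))‖ * (‖(lpFwdDiff : ℓ²(ℤ, E) →L[ℝ] ℓ²(ℤ, E))‖ *
          ‖(lpBwdDiff : ℓ²(ℤ, E) →L[ℝ] ℓ²(ℤ, E))‖) :=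
        (ContinuousLinearMap.opNorm_comp_le _ _).trans <| by
          gcongr; exact ContinuousLinearMap.opNorm_comp_le _ _
    _ ≤ 2 * (2 * 2) := by gcongr
    _ = 8 := by norm_num

end Differences

section Scheme

variable {E : Type*} [NormedAddCommGroup E] [InnerProductSpace ℝ E] {κ : ℝ}

def schemeOp (κ : ℝ) : ℓ²(ℤ, E) →L[ℝ] ℓ²(ℤ, E) := 1 + κ • lpThirdDiff

theorem schemeOp_apply (f : ℓ²(ℤ, E)) (j : ℤ) :
    schemeOp κ f j = f j + κ • lpThirdDiff f j := rfl

theorem sq_norm_le_inner_schemeOp (hκ : 0 ≤ κ) (f : ℓ²(ℤ, E)) :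
    ‖f‖ ^ 2 ≤ ⟪f, schemeOp κ f⟫ := by
  have h : ⟪f, schemeOp κ f⟫ = ‖f‖ ^ 2 + κ * (‖lpFwdDiff (lpBwdDiff f)‖ ^ 2 / 2) := by
    rw [← inner_self_lpThirdDiff, ← real_inner_self_eq_norm_sq, ← real_inner_smul_right,
      ← inner_add_right]
    rfl
  rw [h]
  exact le_add_of_nonneg_right (by positivity)

theorem norm_schemeOp_apply_le (hκ : 0 ≤ κ) (f : ℓ²(ℤ, E)) :
    ‖schemeOp κ f‖ ≤ (1 + 8 * κ) * ‖f‖ := by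
  calc ‖schemeOp κ f‖ = ‖f + κ • lpThirdDiff f‖ := rfl
    _ ≤ ‖f‖ + κ * (8 * ‖f‖) := by
      refine (norm_add_le _ _).trans (add_le_add_right ?_ _)
      rw [norm_smul, Real.norm_of_nonneg hκ]
      gcongr
      exact ContinuousLinearMap.le_of_opNorm_le (lpThirdDiff (E := E)) norm_lpThirdDiff_le f
    _ = (1 + 8 * κ) * ‖f‖ := by ring

end Scheme

/-- There is a continuous linear operator `𝒜_θ = I + θΔt D₊D₊D₋` on `ℓ²(ℤ)` satisfying
`Δx‖a‖² ≤ Δx‖𝒜_θ a‖² ≤ (1 + (16θΔt/Δx³)(1 + 4θΔt/Δx³)) Δx‖a‖²`; it is bijective and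
its (continuous) inverse has operator norm at most `1`. -/
theorem stmt13 (Δx Δt θ : ℝ) (hΔx : 0 < Δx) (hΔt : 0 < Δt)
    (hθ : θ ∈ Set.Icc (0:ℝ) 1) :
    ∃ A : L2Z →L[ℝ] L2Z,
      (∀ a : L2Z, ∀ j : ℤ, (A a : ∀ _ : ℤ, ℝ) j
          = (a : ∀ _ : ℤ, ℝ) j + θ * Δt * D3 Δx (a : ∀ _ : ℤ, ℝ) j) ∧
      (∀ a : L2Z,
        Δx * ‖a‖ ^ 2 ≤ Δx * ‖A a‖ ^ 2 ∧
        Δx * ‖A a‖ ^ 2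
          ≤ (1 + (16 * θ * Δt / Δx ^ 3) * (1 + 4 * θ * Δt / Δx ^ 3)) * (Δx * ‖a‖ ^ 2)) ∧
      Function.Bijective A ∧
      ∃ B : L2Z →L[ℝ] L2Z, (∀ a, B (A a) = a) ∧ (∀ a, A (B a) = a) ∧ ‖B‖ ≤ 1 := by
  set κ := θ * Δt / Δx ^ 3 with hκ_def
  have hκ : 0 ≤ κ := by have := hθ.1; positivity
  have hcoercive := sq_norm_le_inner_schemeOp (E := ℝ) hκ
  obtain ⟨e, he, he_symm⟩ := exists_continuousLinearEquiv_of_sq_norm_le_inner hcoercive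
  refine ⟨schemeOp κ, fun a j => ?_, fun a => ⟨?_, ?_⟩, he ▸ e.bijective,
    e.symm, fun a => ?_, fun a => ?_, he_symm⟩
  · simp only [schemeOp_apply, lpThirdDiff_apply, D3, hκ_def, smul_eq_mul]
    field_simp
  · gcongr
    exact norm_le_norm_apply_of_sq_norm_le_inner hcoercive a
  · calc Δx * ‖schemeOp κ a‖ ^ 2 ≤ Δx * ((1 + 8 * κ) * ‖a‖) ^ 2 := by
          gcongr; exact norm_schemeOp_apply_le hκ a
      _ = _ := by rw [hκ_def]; ring
  · rw [← he]; exact e.symm_apply_apply a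
  · rw [← he]; exact e.apply_symm_apply a
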